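/- arXiv:1903.10001 — 2 statements merged into one kernel-verified Lean document; each statement's English description precedes it below -/
import Mathlib

section
/- Let (X, D) be an F-metric space with associated pair (f, α). If X is F-compact, then X is F-complete and F-totally bounded. -/
open Filter Topology

universe u v

/-- `(X, D)` is an `F`-metric space with associated pair `(f, α)`:
`f` is non-decreasing on `(0, ∞)` (F1), `f(tₙ) → -∞` iff `tₙ → 0` for positive
sequences (F2), `α ≥ 0`, `D` is nonnegative and satisfies (D1), (D2), (D3). -/
structure IsFMetric {X : Type v} (D : X → X → ℝ) (f : ℝ → ℝ) (α : ℝ) : Prop where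
  nonneg : ∀ x y : X, 0 ≤ D x y
  alpha_nonneg : 0 ≤ α
  f_mono : ∀ s t : ℝ, 0 < s → s < t → f s ≤ f t
  f_tendsto : ∀ t : ℕ → ℝ, (∀ n, 0 < t n) →
      (Tendsto t atTop (nhds 0) ↔ Tendsto (fun n => f (t n)) atTop atBot)
  eq_iff : ∀ x y : X, D x y = 0 ↔ x = y
  symm : ∀ x y : X, D x y = D y x
  ineq : ∀ x y : X, ∀ N : ℕ, 2 ≤ N → ∀ u : ℕ → X, u 0 = x → u (N - 1) = y →
      0 < D x y →
      f (D x y) ≤ f (∑ i ∈ Finset.range (N - 1), D (u i) (u (i + 1))) + α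

/-- The associated metric `d(x,y) = inf { Σ_{i<N-1} D(uᵢ, uᵢ₊₁) : N ≥ 2, u₀ = x, u_{N-1} = y }`. -/
noncomputable def assocDist {X : Type v} (D : X → X → ℝ) (x y : X) : ℝ :=
  sInf { s : ℝ | ∃ N : ℕ, 2 ≤ N ∧ ∃ u : ℕ → X, u 0 = x ∧ u (N - 1) = y ∧
    s = ∑ i ∈ Finset.range (N - 1), D (u i) (u (i + 1)) }

/-- The ball `B_ρ(x, ε) = { y : ρ(x,y) < ε }` for a distance-like function `ρ`. -/
def ballWrt {X : Type v} (ρ : X → X → ℝ) (x : X) (ε : ℝ) : Set X := { y | ρ x y < ε }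

/-- `U` is open w.r.t. `ρ`: every point of `U` has a `ρ`-ball around it inside `U`. -/
def IsOpenWrt {X : Type v} (ρ : X → X → ℝ) (U : Set X) : Prop :=
  ∀ x ∈ U, ∃ ε > 0, ballWrt ρ x ε ⊆ U

/-- `C` is closed w.r.t. `ρ`: its complement is open w.r.t. `ρ`. -/
def IsClosedWrt {X : Type v} (ρ : X → X → ℝ) (C : Set X) : Prop := IsOpenWrt ρ Cᶜ

/-- A sequence is Cauchy w.r.t. `ρ`: `ρ(xₙ, xₘ) → 0` as `n, m → ∞`. -/
def IsCauchyWrt {X : Type v} (ρ : X → X → ℝ) (x : ℕ → X) : Prop :=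
  ∀ ε > 0, ∃ N : ℕ, ∀ m, N ≤ m → ∀ n, N ≤ n → ρ (x m) (x n) < ε

/-- A sequence converges to `l` w.r.t. `ρ`: `ρ(xₙ, l) → 0` as `n → ∞`. -/
def ConvergesWrt {X : Type v} (ρ : X → X → ℝ) (x : ℕ → X) (l : X) : Prop :=
  Tendsto (fun n => ρ (x n) l) atTop (nhds 0)

/-- `X` is complete w.r.t. `ρ`: every Cauchy sequence converges. -/
def IsCompleteWrt {X : Type v} (ρ : X → X → ℝ) : Prop :=
  ∀ x : ℕ → X, IsCauchyWrt ρ x → ∃ l : X, ConvergesWrt ρ x l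

/-- The diameter of `A` w.r.t. `ρ`: `sup { ρ(x,y) : x, y ∈ A }`. -/
noncomputable def diamWrt {X : Type v} (ρ : X → X → ℝ) (A : Set X) : ℝ :=
  sSup { r : ℝ | ∃ x ∈ A, ∃ y ∈ A, r = ρ x y }

/-- `A` is bounded w.r.t. `ρ`: there is `M > 0` with `ρ(x,y) ≤ M` for all `x, y ∈ A`. -/
def IsBoundedWrt {X : Type v} (ρ : X → X → ℝ) (A : Set X) : Prop :=
  ∃ M > 0, ∀ x ∈ A, ∀ y ∈ A, ρ x y ≤ M

/-- `A` is totally bounded w.r.t. `ρ`: for every `ε > 0` finitely many `ρ`-balls of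
radius `ε` centered at points of `A` cover `A`. -/
def IsTotallyBoundedWrt {X : Type v} (ρ : X → X → ℝ) (A : Set X) : Prop :=
  ∀ ε > 0, ∃ t : Finset X, ↑t ⊆ A ∧ A ⊆ ⋃ a ∈ t, ballWrt ρ a ε

/-- `A` is compact w.r.t. `ρ`: every cover of `A` by `ρ`-open sets admits a finite subcover. -/
def IsCompactWrt {X : Type v} (ρ : X → X → ℝ) (A : Set X) : Prop :=
  ∀ 𝒰 : Set (Set X), (∀ U ∈ 𝒰, IsOpenWrt ρ U) → A ⊆ ⋃₀ 𝒰 →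
    ∃ 𝒱 ⊆ 𝒰, 𝒱.Finite ∧ A ⊆ ⋃₀ 𝒱

/-!
By (F2) there are arbitrarily small `τ > 0` with `f τ < f ε - α`, so (D3) applied to the chain
`x, y, z` shows that `D x y, D y z < τ / 2` forces `D x z < ε`. Hence the sets `{D < ε}` form a
basis of a uniform structure on `X`, whose topology is `τ_F` and whose Cauchy sequences, limits
and totally bounded sets are the `F`-notions. A compact uniform space is complete and totally
bounded.
-/

open Uniformity

section EntourageBasis

variable {X : Type*} [UniformSpace X] {ρ : X → X → ℝ}
  (hρ : (𝓤 X).HasBasis (fun ε : ℝ => 0 < ε) fun ε => {p | ρ p.1 p.2 < ε})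
include hρ

theorem isOpen_iff_isOpenWrt {U : Set X} : IsOpen U ↔ IsOpenWrt ρ U := by
  simp only [isOpen_iff_mem_nhds, (nhds_basis_uniformity' hρ).mem_iff]
  rfl

theorem isCompact_of_isCompactWrt {s : Set X} (hs : IsCompactWrt ρ s) : IsCompact s :=
  isCompact_generateFrom (TopologicalSpace.generateFrom_setOfPred_isOpen _).symm fun P hP hsP =>
    hs P (fun _ hU => (isOpen_iff_isOpenWrt hρ).1 (hP hU)) hsP

theorem cauchySeq_iff_isCauchyWrt {x : ℕ → X} : CauchySeq x ↔ IsCauchyWrt ρ x :=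
  hρ.cauchySeq_iff

theorem tendsto_nhds_iff_convergesWrt (hρ₀ : ∀ x y, 0 ≤ ρ x y) {x : ℕ → X} {l : X} :
    Tendsto x atTop (𝓝 l) ↔ ConvergesWrt ρ x l := by
  simp only [(nhds_basis_uniformity hρ).tendsto_right_iff, ConvergesWrt, Metric.tendsto_nhds,
    Real.dist_eq, sub_zero, abs_of_nonneg (hρ₀ _ _)]
  rfl

theorem TotallyBounded.isTotallyBoundedWrt {s : Set X} (hs : TotallyBounded s) :
    IsTotallyBoundedWrt ρ s := by
  have hρ' : (𝓤 X).HasBasis (fun ε : ℝ => 0 < ε) fun ε => {p | ρ p.2 p.1 < ε} := by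
    have := hρ.comap Prod.swap
    rwa [comap_swap_uniformity] at this
  intro ε hε
  obtain ⟨t, hts, ht, hst⟩ := totallyBounded_iff_subset.1 hs _ (hρ'.mem_of_mem hε)
  refine ⟨ht.toFinset, by simpa using hts, ?_⟩
  simpa only [Set.Finite.mem_toFinset, ballWrt, Set.mem_ofPred_eq] using hst

end EntourageBasis

namespace IsFMetric

variable {X : Type*} {D : X → X → ℝ} {f : ℝ → ℝ} {α : ℝ}

theorem exists_pos_lt (hD : IsFMetric D f α) (b : ℝ) : ∃ t > 0, f t < b := by
  have hpos (n : ℕ) : (0 : ℝ) < 1 / (n + 1) := by positivity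
  have hbot := (hD.f_tendsto _ hpos).1 tendsto_one_div_add_atTop_nhds_zero_nat
  obtain ⟨n, hn⟩ := (hbot.eventually (eventually_lt_atBot b)).exists
  exact ⟨1 / (n + 1), hpos n, hn⟩

theorem f_le_of_le (hD : IsFMetric D f α) {s t : ℝ} (hs : 0 < s) (hst : s ≤ t) : f s ≤ f t := by
  rcases hst.lt_or_eq with hst | rfl
  exacts [hD.f_mono s t hs hst, le_rfl]

theorem f_le_f_add_add (hD : IsFMetric D f α) (x y z : X) (hxz : 0 < D x z) :
    f (D x z) ≤ f (D x y + D y z) + α := by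
  simpa [Finset.sum_range_succ] using
    hD.ineq x z 3 (by norm_num) (fun i => [x, y, z].getD i z) rfl rfl hxz

theorem exists_pos_lt_of_lt_of_lt (hD : IsFMetric D f α) {ε : ℝ} (hε : 0 < ε) :
    ∃ δ > 0, ∀ x y z, D x y < δ → D y z < δ → D x z < ε := by
  obtain ⟨τ, hτ, hfτ⟩ := hD.exists_pos_lt (f ε - α)
  refine ⟨τ / 2, half_pos hτ, fun x y z hxy hyz => ?_⟩
  by_contra! hεxz
  have hxz : 0 < D x z := hε.trans_le hεxz
  have hsum : 0 < D x y + D y z := by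
    by_contra! hsum
    have hxy : x = y := (hD.eq_iff x y).1 (by linarith [hD.nonneg x y, hD.nonneg y z])
    have hyz : y = z := (hD.eq_iff y z).1 (by linarith [hD.nonneg x y, hD.nonneg y z])
    subst hxy hyz
    simp [(hD.eq_iff x x).2 rfl] at hxz
  have := hD.f_le_of_le hε hεxz
  have := hD.f_le_f_add_add x y z hxz
  have := hD.f_mono _ _ hsum (by linarith : D x y + D y z < τ)
  linarith

abbrev uniformSpace (hD : IsFMetric D f α) : UniformSpace X :=
  .ofCore
    { uniformity := ⨅ ε > 0, 𝓟 {p | D p.1 p.2 < ε}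
      refl := le_iInf₂ fun ε hε => principal_mono.2 fun p (hp : p.1 = p.2) => by
        simpa [hp, (hD.eq_iff _ _).2 rfl] using hε
      symm := tendsto_iInf_iInf fun _ => tendsto_iInf_iInf fun _ =>
        tendsto_principal_principal.2 fun p hp => by rwa [Set.mem_ofPred, hD.symm]
      comp := le_iInf₂ fun _ hε =>
        let ⟨δ, hδ, hδε⟩ := hD.exists_pos_lt_of_lt_of_lt hε
        le_principal_iff.2 <| mem_of_superset
          (mem_lift' <| mem_iInf_of_mem δ <| mem_iInf_of_mem hδ <| mem_principal_self _)
          fun (x, z) ⟨y, hxy, hyz⟩ => hδε x y z hxy hyz }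

theorem hasBasis_uniformity (hD : IsFMetric D f α) :
    𝓤[hD.uniformSpace].HasBasis (fun ε : ℝ => 0 < ε) fun ε => {p | D p.1 p.2 < ε} :=
  hasBasis_biInf_principal'
    (fun ε₁ h₁ ε₂ h₂ => ⟨min ε₁ ε₂, lt_min h₁ h₂,
      Set.ofPred_subset_ofPred.2 fun _ hp => hp.trans_le (min_le_left _ _),
      Set.ofPred_subset_ofPred.2 fun _ hp => hp.trans_le (min_le_right _ _)⟩) ⟨1, one_pos⟩

end IsFMetric

theorem fComplete_fTotallyBounded_of_fCompact_general {X : Type v}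
    (D : X → X → ℝ) (f : ℝ → ℝ) (α : ℝ) (hD : IsFMetric D f α)
    (hcompact : IsCompactWrt D (Set.univ : Set X)) :
    IsCompleteWrt D ∧ IsTotallyBoundedWrt D (Set.univ : Set X) := by
  let := hD.uniformSpace
  have hB := hD.hasBasis_uniformity
  have : CompactSpace X := ⟨isCompact_of_isCompactWrt hB hcompact⟩
  refine ⟨fun x hx => ?_, isCompact_univ.totallyBounded.isTotallyBoundedWrt hB⟩
  obtain ⟨l, hl⟩ := cauchySeq_tendsto_of_complete ((cauchySeq_iff_isCauchyWrt hB).2 hx)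
  exact ⟨l, (tendsto_nhds_iff_convergesWrt hB hD.nonneg).1 hl⟩

/-- if `X` is `F`-compact, then `X` is `F`-complete and `F`-totally
bounded. -/
theorem fComplete_fTotallyBounded_of_fCompact {X : Type v} [Nonempty X]
    (D : X → X → ℝ) (f : ℝ → ℝ) (α : ℝ) (hD : IsFMetric D f α)
    (hcompact : IsCompactWrt D (Set.univ : Set X)) :
    IsCompleteWrt D ∧ IsTotallyBoundedWrt D (Set.univ : Set X) :=
  fComplete_fTotallyBounded_of_fCompact_general D f α hD hcompact
end

section
/- Let (X, D) be an F-metric space with associated pair (f, α), and let d be the associated metric on X. If a subset C ⊆ X is F-closed (its complement belongs to τ_F), then C is closed with respect to the metric d; conversely, if C is closed with respect to d, then C is F-closed. -/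
open Filter Topology

universe u v

/-!
`D` and `d` generate the same open sets because their balls are nested both ways. Every
`d`-ball contains the `D`-ball of the same radius, since `d ≤ D` (a single step is a chain).
Conversely, (F2) gives `δ > 0` with `f δ + α < f ε`; if `d(x, y) < δ` there is a chain from
`x` to `y` of length `s < δ`, and (D3) with monotonicity of `f` yields
`f (D x y) ≤ f s + α ≤ f δ + α < f ε`, forcing `D x y < ε`.
-/

section Wrt

variable {X : Type v} {ρ σ : X → X → ℝ}

theorem IsOpenWrt.of_forall_ball_subset
    (h : ∀ x, ∀ ε > 0, ∃ δ > 0, ballWrt σ x δ ⊆ ballWrt ρ x ε) {U : Set X}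
    (hU : IsOpenWrt ρ U) : IsOpenWrt σ U := by
  intro x hx
  obtain ⟨ε, hε, hball⟩ := hU x hx
  obtain ⟨δ, hδ, hsub⟩ := h x ε hε
  exact ⟨δ, hδ, hsub.trans hball⟩

theorem IsClosedWrt.of_forall_ball_subset
    (h : ∀ x, ∀ ε > 0, ∃ δ > 0, ballWrt σ x δ ⊆ ballWrt ρ x ε) {C : Set X}
    (hC : IsClosedWrt ρ C) : IsClosedWrt σ C :=
  IsOpenWrt.of_forall_ball_subset h hC

end Wrt

section Chains

variable {X : Type v} {D : X → X → ℝ} {x y : X} {s : ℝ}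

def chainLengths (D : X → X → ℝ) (x y : X) : Set ℝ :=
  { s : ℝ | ∃ N : ℕ, 2 ≤ N ∧ ∃ u : ℕ → X, u 0 = x ∧ u (N - 1) = y ∧
    s = ∑ i ∈ Finset.range (N - 1), D (u i) (u (i + 1)) }

theorem assocDist_eq_sInf_chainLengths : assocDist D x y = sInf (chainLengths D x y) := rfl

theorem self_mem_chainLengths (D : X → X → ℝ) (x y : X) : D x y ∈ chainLengths D x y :=
  ⟨2, le_rfl, fun i => if i = 0 then x else y, by simp, by simp, by simp⟩

theorem nonneg_of_mem_chainLengths (hD : ∀ a b, 0 ≤ D a b) (hs : s ∈ chainLengths D x y) :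
    0 ≤ s := by
  obtain ⟨N, -, u, -, -, rfl⟩ := hs
  exact Finset.sum_nonneg fun i _ => hD _ _

theorem assocDist_le (hD : ∀ a b, 0 ≤ D a b) (x y : X) : assocDist D x y ≤ D x y := by
  rw [assocDist_eq_sInf_chainLengths]
  exact csInf_le ⟨0, fun _ => nonneg_of_mem_chainLengths hD⟩ (self_mem_chainLengths D x y)

theorem eq_of_forall_lt_eq_succ {u : ℕ → X} {k : ℕ} (h : ∀ i < k, u i = u (i + 1)) :
    u 0 = u k := by
  induction k with
  | zero => rfl
  | succ k ih => exact (ih fun i hi => h i (hi.trans k.lt_succ_self)).trans (h k k.lt_succ_self)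

theorem pos_of_mem_chainLengths (hD : ∀ a b, 0 ≤ D a b) (hD0 : ∀ a b, D a b = 0 → a = b)
    (hxy : x ≠ y) (hs : s ∈ chainLengths D x y) : 0 < s := by
  refine (nonneg_of_mem_chainLengths hD hs).lt_of_ne fun hs0 => hxy ?_
  obtain ⟨N, -, u, rfl, rfl, rfl⟩ := hs
  have hsteps := (Finset.sum_eq_zero_iff_of_nonneg fun i _ => hD (u i) (u (i + 1))).1 hs0.symm
  exact eq_of_forall_lt_eq_succ fun i hi => hD0 _ _ (hsteps i (Finset.mem_range.2 hi))

end Chains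

namespace IsFMetric

variable {X : Type v} {D : X → X → ℝ} {f : ℝ → ℝ} {α : ℝ}

theorem exists_pos_f_lt (hD : IsFMetric D f α) (c : ℝ) : ∃ δ > 0, f δ < c := by
  have hf := (hD.f_tendsto (fun n : ℕ => 1 / ((n : ℝ) + 1)) fun n => by positivity).1
    tendsto_one_div_add_atTop_nhds_zero_nat
  obtain ⟨n, hn⟩ := (hf.eventually (eventually_lt_atBot c)).exists
  exact ⟨1 / ((n : ℝ) + 1), by positivity, hn⟩

theorem lt_of_f_lt (hD : IsFMetric D f α) {s t : ℝ} (ht : 0 < t) (h : f s < f t) : s < t := by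
  by_contra! hts
  rcases hts.eq_or_lt with rfl | hts
  · exact h.false
  · exact (hD.f_mono t s ht hts).not_gt h

theorem f_le_of_mem_chainLengths (hD : IsFMetric D f α) {x y : X} {s : ℝ}
    (hs : s ∈ chainLengths D x y) (hxy : 0 < D x y) : f (D x y) ≤ f s + α := by
  obtain ⟨N, hN, u, hu0, huN, rfl⟩ := hs
  exact hD.ineq x y N hN u hu0 huN hxy

theorem exists_pos_forall_assocDist_lt (hD : IsFMetric D f α) {ε : ℝ} (hε : 0 < ε) :
    ∃ δ > 0, ∀ x y, assocDist D x y < δ → D x y < ε := by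
  obtain ⟨δ, hδ, hfδ⟩ := hD.exists_pos_f_lt (f ε - α)
  refine ⟨δ, hδ, fun x y hxy => ?_⟩
  rcases eq_or_ne x y with rfl | hne
  · rwa [(hD.eq_iff x x).2 rfl]
  have hDxy : 0 < D x y := (hD.nonneg x y).lt_of_ne fun h => hne ((hD.eq_iff x y).1 h.symm)
  rw [assocDist_eq_sInf_chainLengths] at hxy
  obtain ⟨s, hs, hsδ⟩ := exists_lt_of_csInf_lt ⟨_, self_mem_chainLengths D x y⟩ hxy
  have hs0 : 0 < s := pos_of_mem_chainLengths hD.nonneg (fun a b => (hD.eq_iff a b).1) hne hs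
  refine hD.lt_of_f_lt hε ?_
  calc f (D x y) ≤ f s + α := hD.f_le_of_mem_chainLengths hs hDxy
    _ ≤ f δ + α := by gcongr; exact hD.f_mono s δ hs0 hsδ
    _ < f ε := by linarith

end IsFMetric

theorem fClosed_iff_closed_assocDist_general {X : Type v} (D : X → X → ℝ)
    (f : ℝ → ℝ) (α : ℝ) (hD : IsFMetric D f α) (C : Set X) :
    IsClosedWrt D C ↔ IsClosedWrt (assocDist D) C := by
  refine ⟨IsClosedWrt.of_forall_ball_subset fun x ε hε => ?_,
    IsClosedWrt.of_forall_ball_subset fun x ε hε => ?_⟩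
  · obtain ⟨δ, hδ, hclose⟩ := hD.exists_pos_forall_assocDist_lt hε
    exact ⟨δ, hδ, hclose x⟩
  · exact ⟨ε, hε, fun y hy => (assocDist_le hD.nonneg x y).trans_lt hy⟩

/-- `C ⊆ X` is `F`-closed iff `C` is closed w.r.t. the associated
metric `d` (both implications). -/
theorem fClosed_iff_closed_assocDist {X : Type v} [Nonempty X] (D : X → X → ℝ)
    (f : ℝ → ℝ) (α : ℝ) (hD : IsFMetric D f α) (C : Set X) :
    IsClosedWrt D C ↔ IsClosedWrt (assocDist D) C :=
  fClosed_iff_closed_assocDist_general D f α hD C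
end
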